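/- Let L = {1ⁿ : n ∈ ℕ} ∪ {0ⁿ : n ∈ ℕ} ⊆ {0,1}* (this includes the empty word). Then the isometry group Isom_2(L) of L with respect to lev_2 = lev_{1,2} is isomorphic to the infinite dihedral group D_∞, and it acts transitively on L. -/

import Mathlib

/-! Port note: `Mathlib.Data.List.EditDistance` (which provided `Levenshtein.Cost` and
`levenshtein`) is no longer in Mathlib; its definitions are reproduced here with their
original meaning. -/

structure Levenshtein.Cost (α β δ : Type*) where
  delete : α → δ
  insert : β → δ
  substitute : α → β → δ

namespace Levenshtein

def impl {α β δ : Type*} [AddZeroClass δ] [Min δ] (C : Cost α β δ)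
    (xs : List α) (y : β) (d : {r : List δ // 0 < r.length}) : {r : List δ // 0 < r.length} :=
  let ⟨ds, w⟩ := d
  xs.zip (ds.zip ds.tail) |>.foldr
    (init := ⟨[C.insert y + ds.getLast (List.ne_nil_of_length_pos w)], by simp⟩)
    (fun ⟨x, d₀, d₁⟩ ⟨r, w⟩ =>
      ⟨min (C.delete x + r[0]) (min (C.insert y + d₀) (C.substitute x y + d₁)) :: r, by simp⟩)

end Levenshtein

def suffixLevenshtein {α β δ : Type*} [AddZeroClass δ] [Min δ] (C : Levenshtein.Cost α β δ)
    (xs : List α) (ys : List β) : {r : List δ // 0 < r.length} :=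
  ys.foldr
    (Levenshtein.impl C xs)
    (xs.foldr (init := ⟨[0], by simp⟩) (fun a ⟨ds, w⟩ => ⟨(C.delete a + ds[0]) :: ds, by simp⟩))

def levenshtein {α β δ : Type*} [AddZeroClass δ] [Min δ] (C : Levenshtein.Cost α β δ)
    (xs : List α) (ys : List β) : δ :=
  let ⟨r, w⟩ := suffixLevenshtein C xs ys
  r[0]


/-- Cost structure for the generalized Levenshtein distance:
insertions and deletions cost `γ`, substitutions cost `θ`. -/
def levCost (A : Type*) [DecidableEq A] (γ θ : ℝ) : Levenshtein.Cost A A ℝ where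
  delete _ := γ
  insert _ := γ
  substitute a b := if a = b then 0 else θ

/-- The generalized Levenshtein distance `lev_{γ,θ}` between two words over `A`:
the minimal total cost of transforming one word into the other by insertions and
deletions (of cost `γ`) and substitutions (of cost `θ`). -/
def lev {A : Type*} [DecidableEq A] (γ θ : ℝ) (u v : List A) : ℝ :=
  levenshtein (levCost A γ θ) u v

/-- The isometry group of a language `L ⊆ A*` with respect to a distance `d` on `A*`:
the group (under composition) of bijections of `L` preserving `d`. -/
def IsomGroup {A : Type*} (d : List A → List A → ℝ) (L : Set (List A)) :
    Subgroup (Equiv.Perm L) where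
  carrier := {φ : Equiv.Perm L | ∀ u v : L, d (φ u) (φ v) = d u v}
  one_mem' := by intro u v; rfl
  mul_mem' := by intro φ ψ hφ hψ u v; simp only [Equiv.Perm.mul_apply]; rw [hφ, hψ]
  inv_mem' := by
    intro φ hφ u v
    have h := hφ (φ⁻¹ u) (φ⁻¹ v)
    simpa using h.symm


/-!
Writing `signedUnary z` for `1^z` when `z ≥ 0` and `0^(-z)` when `z < 0` identifies `L` with `ℤ`,
and `lev_2` becomes `|x - y|`: between powers of one letter only the length difference has to be
inserted or deleted, and between `1^m` and `0^n` a substitution costs as much as a deletion plus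
an insertion, so the distance is `m + n`. Hence `Isom_2(L)` is the isometry group of `ℤ`, whose
elements are the translations and the reflections `x ↦ c - x`; this is `D_∞`, and the
translations already act transitively.
-/

namespace Levenshtein

variable {α β δ : Type*} [AddZeroClass δ] [Min δ] (C : Cost α β δ)

theorem impl_cons (x : α) (xs : List α) (y : β) (d : δ) (ds : List δ)
    (w : 0 < (d :: ds).length) (w' : 0 < ds.length) :
    impl C (x :: xs) y ⟨d :: ds, w⟩ =
      let ⟨r, w⟩ := impl C xs y ⟨ds, w'⟩
      ⟨min (C.delete x + r[0]) (min (C.insert y + d) (C.substitute x y + ds[0])) :: r, by simp⟩ :=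
  match ds, w' with | _ :: _, _ => rfl

theorem impl_cons_fst_zero (x : α) (xs : List α) (y : β) (d : δ) (ds : List δ)
    (w : 0 < (d :: ds).length) (h : 0 < (impl C (x :: xs) y ⟨d :: ds, w⟩).1.length)
    (w' : 0 < ds.length) :
    (impl C (x :: xs) y ⟨d :: ds, w⟩).1[0]'h =
      let ⟨r, w⟩ := impl C xs y ⟨ds, w'⟩
      min (C.delete x + r[0]) (min (C.insert y + d) (C.substitute x y + ds[0])) :=
  match ds, w' with | _ :: _, _ => rfl

theorem impl_length (xs : List α) (y : β) (d : {r : List δ // 0 < r.length})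
    (w : d.1.length = xs.length + 1) :
    (impl C xs y d).1.length = xs.length + 1 := by
  induction xs generalizing d with
  | nil => rfl
  | cons x xs ih =>
    match d, w with
    | ⟨_ :: d₂ :: ds, _⟩, w =>
      dsimp [impl]
      congr 1
      exact ih ⟨d₂ :: ds, by simp⟩ (by simpa using w)

end Levenshtein

open Levenshtein

theorem nonemptyList_ext {δ : Type*} {x y : {r : List δ // 0 < r.length}}
    (h₀ : x.1[0]'x.2 = y.1[0]'y.2) (h : x.1.tail = y.1.tail) : x = y := by
  match x, y with
  | ⟨_ :: _, _⟩, ⟨_ :: _, _⟩ => simp_all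

section Recursion

variable {α β δ : Type*} [AddZeroClass δ] [Min δ] (C : Cost α β δ)

theorem suffixLevenshtein_length (xs : List α) (ys : List β) :
    (suffixLevenshtein C xs ys).1.length = xs.length + 1 := by
  induction ys with
  | nil => induction xs <;> simp_all [suffixLevenshtein]
  | cons y ys ih => exact impl_length C xs y _ ih

theorem suffixLevenshtein_cons₁ (x : α) (xs : List α) (ys : List β) :
    suffixLevenshtein C (x :: xs) ys =
      ⟨levenshtein C (x :: xs) ys :: (suffixLevenshtein C xs ys).1, by simp⟩ := by
  induction ys with
  | nil => rfl
  | cons y ys ih =>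
    refine nonemptyList_ext rfl ?_
    show (impl C (x :: xs) y (suffixLevenshtein C (x :: xs) ys)).1.tail = _
    rw [ih, impl_cons C x xs y _ _ _ (by simp [suffixLevenshtein_length])]
    rfl

variable {C}

theorem levenshtein_nil_nil : levenshtein C [] [] = 0 := rfl

theorem levenshtein_nil_cons (y : β) (ys : List β) :
    levenshtein C [] (y :: ys) = C.insert y + levenshtein C [] ys := by
  have hl := suffixLevenshtein_length C ([] : List α) ys
  show (impl C [] y (suffixLevenshtein C [] ys)).1[0]'(by rw [impl_length C [] y _ hl]; simp) =
    C.insert y + (suffixLevenshtein C [] ys).1[0]'(by simp [hl])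
  generalize suffixLevenshtein C [] ys = s at hl ⊢
  match s, hl with
  | ⟨[_], _⟩, _ => rfl

theorem levenshtein_cons_nil (x : α) (xs : List α) :
    levenshtein C (x :: xs) [] = C.delete x + levenshtein C xs [] :=
  rfl

theorem levenshtein_cons_cons (x : α) (xs : List α) (y : β) (ys : List β) :
    levenshtein C (x :: xs) (y :: ys) =
      min (C.delete x + levenshtein C xs (y :: ys))
        (min (C.insert y + levenshtein C (x :: xs) ys)
          (C.substitute x y + levenshtein C xs ys)) := by
  show (impl C (x :: xs) y (suffixLevenshtein C (x :: xs) ys)).1[0]'(by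
    rw [impl_length C _ y _ (suffixLevenshtein_length C _ ys)]; simp) = _
  simp only [suffixLevenshtein_cons₁]
  rw [impl_cons_fst_zero]
  rfl

end Recursion

section UnaryWords

variable {A : Type*} [DecidableEq A] {γ θ : ℝ}

theorem lev_nil_left (ys : List A) : lev γ θ [] ys = γ * ys.length := by
  induction ys with
  | nil => simp [lev, levenshtein_nil_nil]
  | cons y ys ih =>
    rw [lev, levenshtein_nil_cons, ← lev, ih]
    simp only [levCost, List.length_cons, Nat.cast_succ]
    ring

theorem lev_nil_right (xs : List A) : lev γ θ xs [] = γ * xs.length := by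
  induction xs with
  | nil => simp [lev, levenshtein_nil_nil]
  | cons x xs ih =>
    rw [lev, levenshtein_cons_nil, ← lev, ih]
    simp only [levCost, List.length_cons, Nat.cast_succ]
    ring

theorem lev_replicate_succ_succ (a b : A) (m n : ℕ) :
    lev γ θ (List.replicate (m + 1) a) (List.replicate (n + 1) b) =
      min (γ + lev γ θ (List.replicate m a) (List.replicate (n + 1) b))
        (min (γ + lev γ θ (List.replicate (m + 1) a) (List.replicate n b))
          ((if a = b then 0 else θ) + lev γ θ (List.replicate m a) (List.replicate n b))) :=
  levenshtein_cons_cons a (List.replicate m a) b (List.replicate n b)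

theorem lev_replicate_same (hγ : 0 ≤ γ) (a : A) (m n : ℕ) :
    lev γ θ (List.replicate m a) (List.replicate n a) = γ * |(m : ℝ) - n| := by
  induction m generalizing n with
  | zero => simp [lev_nil_left, abs_of_nonneg]
  | succ m ihm =>
    induction n with
    | zero => simp [lev_nil_right, abs_of_nonneg (by positivity : (0 : ℝ) ≤ m + 1)]
    | succ n ihn =>
      rw [lev_replicate_succ_succ, if_pos rfl, zero_add, ihm, ihn, ihm]
      push_cast
      have h₁ : |(m : ℝ) - n| ≤ |(m : ℝ) - (n + 1)| + 1 := by
        simpa using abs_sub_le (m : ℝ) (n + 1) n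
      have h₂ : |(m : ℝ) - n| ≤ 1 + |(m + 1 : ℝ) - n| := by
        simpa using abs_sub_le (m : ℝ) (m + 1) n
      rw [min_eq_right (min_le_of_right_le (by nlinarith)), min_eq_right (by nlinarith)]
      ring_nf

theorem lev_replicate_of_ne (hθ : 2 * γ ≤ θ) {a b : A} (hab : a ≠ b) (m n : ℕ) :
    lev γ θ (List.replicate m a) (List.replicate n b) = γ * (m + n) := by
  induction m generalizing n with
  | zero => simp [lev_nil_left]
  | succ m ihm =>
    induction n with
    | zero => simp [lev_nil_right]
    | succ n ihn =>
      rw [lev_replicate_succ_succ, if_neg hab, ihm, ihn, ihm]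
      push_cast
      rw [min_eq_left (le_min (by linarith) (by linarith))]
      ring

end UnaryWords

def signedUnary (z : ℤ) : List Bool :=
  List.replicate z.natAbs (decide (0 ≤ z))

theorem lev_signedUnary (x y : ℤ) : lev 1 2 (signedUnary x) (signedUnary y) = dist x y := by
  rw [Int.dist_eq, signedUnary, signedUnary]
  by_cases h : decide (0 ≤ x) = decide (0 ≤ y)
  · rw [h, lev_replicate_same zero_le_one, one_mul]
    simp only [decide_eq_decide] at h
    push_cast [Nat.cast_natAbs]
    exact_mod_cast (show |(|x| - |y|)| = |x - y| by simp only [Int.abs_eq_natAbs]; omega)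
  · rw [lev_replicate_of_ne (by norm_num) h, one_mul]
    simp only [decide_eq_decide] at h
    push_cast [Nat.cast_natAbs]
    exact_mod_cast (show |x| + |y| = |x - y| by simp only [Int.abs_eq_natAbs]; omega)

theorem signedUnary_injective : Function.Injective signedUnary := fun x y h =>
  dist_eq_zero.mp (by rw [← lev_signedUnary, h, lev_signedUnary, dist_self])

def unaryWords : Set (List Bool) :=
  {w | ∃ n : ℕ, w = List.replicate n true} ∪ {w | ∃ n : ℕ, w = List.replicate n false}

theorem range_signedUnary : Set.range signedUnary = unaryWords := by
  ext w
  constructor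
  · rintro ⟨z, rfl⟩
    by_cases hz : 0 ≤ z
    · exact Or.inl ⟨z.natAbs, by simp [signedUnary, hz]⟩
    · exact Or.inr ⟨z.natAbs, by simp [signedUnary, hz]⟩
  · rintro (⟨n, rfl⟩ | ⟨n, rfl⟩)
    · exact ⟨n, by simp [signedUnary]⟩
    · exact ⟨-n, by simp [signedUnary, em]⟩

noncomputable def signedUnaryEquiv : ℤ ≃ unaryWords :=
  (Equiv.ofInjective _ signedUnary_injective).trans (Equiv.setCongr range_signedUnary)

namespace IsomGroup

variable {A X : Type*} [PseudoMetricSpace X] {d : List A → List A → ℝ} {L : Set (List A)}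

def mulEquivIsometryEquiv (e : X ≃ L) (he : ∀ x y, d (e x) (e y) = dist x y) :
    IsomGroup d L ≃* (X ≃ᵢ X) where
  toFun φ :=
    { toEquiv := e.symm.permCongr φ
      isometry_toFun := Isometry.of_dist_eq fun x y => by
        simpa [← he] using φ.2 (e x) (e y) }
  invFun ψ := ⟨e.permCongr ψ.toEquiv, fun u v => by
    simp only [Equiv.permCongr_apply, he, IsometryEquiv.coe_toEquiv]
    rw [ψ.dist_eq, ← he, e.apply_symm_apply, e.apply_symm_apply]⟩
  left_inv φ := by ext; simp
  right_inv ψ := by ext; simp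
  map_mul' φ ψ := by ext; simp

end IsomGroup

theorem Int.isometry_eq_add_or_eq_sub {f : ℤ → ℤ} (hf : Isometry f) :
    (∀ x, f x = f 0 + x) ∨ (∀ x, f x = f 0 - x) := by
  have h : ∀ x y, (f x - f y).natAbs = (x - y).natAbs := fun x y => by
    have := Int.cast_injective (α := ℝ) (by simpa only [Int.dist_eq'] using hf.dist_eq x y)
    simpa only [Int.abs_eq_natAbs, Nat.cast_inj] using this
  rcases (by have := h 1 0; omega : f 1 = f 0 + 1 ∨ f 1 = f 0 - 1) with h1 | h1
  · exact .inl fun x => by have := h x 0; have := h x 1; omega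
  · exact .inr fun x => by have := h x 0; have := h x 1; omega

namespace DihedralGroup

def intIsometryHom : DihedralGroup 0 →* (ℤ ≃ᵢ ℤ) :=
  MonoidHom.mk'
    (fun
      | r i => IsometryEquiv.subRight (i : ℤ)
      | sr i => IsometryEquiv.subLeft (i : ℤ))
    (by
      -- `ZMod 0` is `ℤ` by definition
      rintro (i | i) (j | j) <;> change ℤ at i j <;> ext x
      · change x - (i + j) = x - j - i
        ring
      · change (j - i) - x = (j - x) - i
        ring
      · change (i + j) - x = i - (x - j)
        ring
      · change x - (j - i) = i - (j - x)
        ring)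

theorem intIsometryHom_injective : Function.Injective intIsometryHom := by
  refine (injective_iff_map_eq_one _).mpr ?_
  rintro (i | i) h <;> change ℤ at i
  · have h0 : 0 - i = 0 := congr($h 0)
    rw [zero_sub, neg_eq_zero] at h0
    rw [h0]
    rfl
  · have h0 : i - 0 = 0 := congr($h 0)
    have h1 : i - 1 = 1 := congr($h 1)
    omega

theorem intIsometryHom_surjective : Function.Surjective intIsometryHom := by
  intro ψ
  rcases Int.isometry_eq_add_or_eq_sub ψ.isometry with h | h
  · refine ⟨r (-ψ 0), IsometryEquiv.ext fun x => ?_⟩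
    change x - -ψ 0 = ψ x
    rw [h x, sub_neg_eq_add, add_comm]
  · exact ⟨sr (ψ 0), IsometryEquiv.ext fun x => (h x).symm⟩

noncomputable def intIsometryEquiv : DihedralGroup 0 ≃* (ℤ ≃ᵢ ℤ) :=
  MulEquiv.ofBijective intIsometryHom ⟨intIsometryHom_injective, intIsometryHom_surjective⟩

end DihedralGroup

/-- Let `L = {1ⁿ : n ∈ ℕ} ∪ {0ⁿ : n ∈ ℕ} ⊆ {0,1}*` (including the empty
word). Then `Isom_2(L)` (w.r.t. `lev_2 = lev_{1,2}`) is isomorphic to the infinite dihedral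
group and acts transitively on `L`. -/
theorem stmt_6 :
    Nonempty (IsomGroup (lev 1 2)
        ({w | ∃ n : ℕ, w = List.replicate n true} ∪ {w | ∃ n : ℕ, w = List.replicate n false})
      ≃* DihedralGroup 0) ∧
    (∀ u v : ({w | ∃ n : ℕ, w = List.replicate n true} ∪
        {w | ∃ n : ℕ, w = List.replicate n false} : Set (List Bool)),
      ∃ φ ∈ IsomGroup (lev 1 2)
        ({w | ∃ n : ℕ, w = List.replicate n true} ∪ {w | ∃ n : ℕ, w = List.replicate n false}),
        φ u = v) := by
  let e := signedUnaryEquiv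
  let M := IsomGroup.mulEquivIsometryEquiv e lev_signedUnary
  refine ⟨⟨M.trans DihedralGroup.intIsometryEquiv.symm⟩, fun u v => ?_⟩
  let φ := M.symm (IsometryEquiv.addRight (e.symm v - e.symm u))
  refine ⟨φ.1, φ.2, ?_⟩
  change e (e.symm u + (e.symm v - e.symm u)) = v
  rw [add_sub_cancel]
  exact e.apply_symm_apply v
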